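/- arXiv:2303.03813 — 2 statements merged into one kernel-verified Lean document; each statement's English description precedes it below -/
import Mathlib

section
/- For an open subset U of an ordered topological space S, the localic upper cone with respect to the Egli-Milner order equals the interior of the upset: ⋃{V open | U ⊴ V} = interior(↑U), where U ⊴ V means V ⊆ ↑U and U ⊆ ↓V. -/
theorem stmt_14 {S : Type*} [TopologicalSpace S] [Preorder S] (U : Set S) (hU : IsOpen U) :
    ⋃₀ {V : Set S | IsOpen V ∧ V ⊆ {y | ∃ x ∈ U, x ≤ y} ∧ U ⊆ {x | ∃ y ∈ V, x ≤ y}} =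
      interior {y : S | ∃ x ∈ U, x ≤ y} := by
  apply subset_antisymm
  · intro x hx
    obtain ⟨V, ⟨hVo, hV1, _⟩, hxV⟩ := hx
    exact interior_maximal hV1 hVo hxV
  · intro x hx
    refine ⟨interior {y : S | ∃ x ∈ U, x ≤ y}, ⟨isOpen_interior, interior_subset, ?_⟩, hx⟩
    intro u hu
    exact ⟨u, interior_maximal (fun z hz => show ∃ x ∈ U, x ≤ z from ⟨z, hz, le_refl z⟩) hU hu, le_refl u⟩
end

section
/- Let L be an ordered locale (frame with preorder ⊴ satisfying axiom (∨)). For completely prime filters F, G of L: F ≤ G (i.e., ∀U∈F ∃V∈G, U⊴V and ∀V∈G ∃U∈F, U⊴V) if and only if (∀ U ∈ F, ⇑U ∈ G) and (∀ V ∈ G, ⇓V ∈ F), where ⇑U = ⋁{V | U ⊴ V} and ⇓V = ⋁{W | W ⊴ V}. -/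
def AxiomV {L : Type*} [Order.Frame L] (r : L → L → Prop) : Prop :=
  ∀ P : Set (L × L), (∀ p ∈ P, r p.1 p.2) →
    r (sSup (Prod.fst '' P)) (sSup (Prod.snd '' P))

def IsCPF {L : Type*} [Order.Frame L] (F : Set L) : Prop :=
  F.Nonempty ∧ ⊥ ∉ F ∧
  (∀ U ∈ F, ∀ V : L, U ≤ V → V ∈ F) ∧
  (∀ U ∈ F, ∀ V ∈ F, U ⊓ V ∈ F) ∧
  (∀ A : Set L, sSup A ∈ F → ∃ a ∈ A, a ∈ F)

theorem stmt_17 {L : Type*} [Order.Frame L] (r : L → L → Prop)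
    (hrefl : Reflexive r) (htrans : Transitive r) (hax : AxiomV r)
    (F G : Set L) (hF : IsCPF F) (hG : IsCPF G) :
    ((∀ U ∈ F, ∃ V ∈ G, r U V) ∧ (∀ V ∈ G, ∃ U ∈ F, r U V)) ↔
      ((∀ U ∈ F, sSup {V | r U V} ∈ G) ∧ (∀ V ∈ G, sSup {W | r W V} ∈ F)) := by
  obtain ⟨-, -, hFup, -, hFcp⟩ := hF
  obtain ⟨-, -, hGup, -, hGcp⟩ := hG
  constructor
  · rintro ⟨h1, h2⟩
    constructor
    · intro U hU
      obtain ⟨V, hV, hrUV⟩ := h1 U hU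
      exact hGup V hV _ (le_sSup hrUV)
    · intro V hV
      obtain ⟨U, hU, hrUV⟩ := h2 V hV
      exact hFup U hU _ (le_sSup hrUV)
  · rintro ⟨h1, h2⟩
    constructor
    · intro U hU
      obtain ⟨V, hrUV, hV⟩ := hGcp _ (h1 U hU)
      exact ⟨V, hV, hrUV⟩
    · intro V hV
      obtain ⟨U, hrUV, hU⟩ := hFcp _ (h2 V hV)
      exact ⟨U, hU, hrUV⟩
end
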